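/- arXiv:0804.0989 — 8 statements merged into one kernel-verified Lean document; each statement's English description precedes it below -/
import Mathlib

section
/- Let A be a symmetric positive-definite n×n real matrix and let X be a full-rank n×p real matrix satisfying AX = X(XᵀAX). Then XᵀX = I_p. -/
open Matrix

theorem oja_zero_orthonormal {n p : ℕ}
    (A : Matrix (Fin n) (Fin n) ℝ) (X : Matrix (Fin n) (Fin p) ℝ)
    (hA : A.PosDef) (hX : IsUnit (Xᵀ * X))
    (h : A * X = X * (Xᵀ * A * X)) :
    Xᵀ * X = 1 := by
  have hXH : Xᴴ = Xᵀ := Matrix.conjTranspose_eq_transpose_of_trivial X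
  have hB : (Xᵀ * A * X).PosDef := by
    rw [Matrix.posDef_iff_dotProduct_mulVec]
    constructor
    · exact hXH ▸ Matrix.isHermitian_conjTranspose_mul_mul X hA.1
    · intro x hx
      have hXx : X *ᵥ x ≠ 0 := by
        intro hc
        apply hx
        have h1 : (Xᵀ * X) *ᵥ x = 0 := by
          rw [← Matrix.mulVec_mulVec, hc, Matrix.mulVec_zero]
        have h2 := Matrix.mulVec_injective_iff_isUnit.2 hX
        have := h2 (a₁ := x) (a₂ := 0) (by simpa using h1)
        simpa using this
      have hpos := hA.dotProduct_mulVec_pos hXx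
      have : star x ⬝ᵥ (Xᵀ * A * X) *ᵥ x = star (X *ᵥ x) ⬝ᵥ A *ᵥ (X *ᵥ x) := by
        simp only [star_trivial, ← Matrix.mulVec_mulVec, Matrix.dotProduct_mulVec,
          Matrix.vecMul_transpose]
      rw [this]
      exact hpos
  have key : (Xᵀ * X) * (Xᵀ * A * X) = 1 * (Xᵀ * A * X) := by
    have := congrArg (fun M => Xᵀ * M) h
    simp only [← Matrix.mul_assoc] at this ⊢
    rw [Matrix.one_mul]
    exact this.symm
  exact hB.isUnit.mul_left_injective key
end

section
/- Let A be a symmetric n×n real matrix and X a full-rank n×p real matrix. Then F(X) := AX − X XᵀAX = 0 if and only if the column space of X is an invariant subspace of A and XᵀX = I_p, provided A is positive definite. -/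
open Matrix

theorem oja_zero_iff_invariant_orthonormal {n p : ℕ}
    (A : Matrix (Fin n) (Fin n) ℝ) (X : Matrix (Fin n) (Fin p) ℝ)
    (hA : A.PosDef) (hX : IsUnit (Xᵀ * X)) :
    A * X - X * (Xᵀ * A * X) = 0 ↔
      (Submodule.map A.mulVecLin (LinearMap.range X.mulVecLin) ≤
        LinearMap.range X.mulVecLin) ∧ Xᵀ * X = 1 := by
  have hXinj : ∀ v : Fin p → ℝ, X *ᵥ v = 0 → v = 0 := by
    intro v hv
    have h1 : (Xᵀ * X) *ᵥ v = (Xᵀ * X) *ᵥ 0 := by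
      rw [← mulVec_mulVec, hv, mulVec_zero, mulVec_zero]
    exact Matrix.mulVec_injective_iff_isUnit.mpr hX h1
  have hB : (Xᵀ * A * X).PosDef := by
    refine posDef_iff_dotProduct_mulVec.mpr ⟨?_, ?_⟩
    · have hAh : Aᵀ = A := hA.1
      unfold Matrix.IsHermitian
      rw [conjTranspose_eq_transpose_of_trivial, transpose_mul, transpose_mul,
        transpose_transpose, hAh, Matrix.mul_assoc]
    · intro v hv
      have hXv : X *ᵥ v ≠ 0 := fun h => hv (hXinj v h)
      have := (posDef_iff_dotProduct_mulVec.mp hA).2 hXv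
      simpa [mul_assoc, ← mulVec_mulVec, dotProduct_mulVec, vecMul_transpose] using this
  constructor
  · intro h
    have heq : A * X = X * (Xᵀ * A * X) := sub_eq_zero.mp h
    have hXX : Xᵀ * X = 1 := by
      have h2 : (Xᵀ * X) * (Xᵀ * A * X) = 1 * (Xᵀ * A * X) := by
        rw [one_mul]
        calc (Xᵀ * X) * (Xᵀ * A * X) = Xᵀ * (X * (Xᵀ * A * X)) := by
              rw [Matrix.mul_assoc]
          _ = Xᵀ * (A * X) := by rw [← heq]
          _ = Xᵀ * A * X := by rw [Matrix.mul_assoc]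
      exact hB.isUnit.mul_right_cancel h2
    refine ⟨?_, hXX⟩
    rintro y ⟨z, ⟨v, rfl⟩, rfl⟩
    refine ⟨(Xᵀ * A * X) *ᵥ v, ?_⟩
    simp only [mulVecLin_apply, mulVec_mulVec, ← heq]
  · rintro ⟨hinv, hXX⟩
    have key : ∀ v : Fin p → ℝ, (A * X) *ᵥ v = (X * (Xᵀ * A * X)) *ᵥ v := by
      intro v
      obtain ⟨u, hu⟩ := hinv ⟨X.mulVecLin v, ⟨v, rfl⟩, rfl⟩
      simp only [mulVecLin_apply] at hu
      have : (X * (Xᵀ * A * X)) *ᵥ v = X *ᵥ (Xᵀ *ᵥ (A *ᵥ (X *ᵥ v))) := by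
        simp [← mulVec_mulVec, mul_assoc]
      rw [this, ← hu, mulVec_mulVec u Xᵀ X, hXX, one_mulVec, hu, mulVec_mulVec]
    have : A * X = X * (Xᵀ * A * X) := by
      ext i j
      have := congrFun (key (Pi.single j 1)) i
      simpa [mulVec_single] using this
    rw [this, sub_self]
end

section
/- For any full-rank X ∈ ℝ^{n×p}, the map P^h_X(Z) = Z − X·skew((XᵀX)⁻¹XᵀZ) is idempotent, and its image equals the set {XS + W : S symmetric p×p, XᵀW = 0}. -/
open Matrix

theorem oja_Ph_projection {n p : ℕ}
    (X : Matrix (Fin n) (Fin p) ℝ) (hX : IsUnit (Xᵀ * X)) :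
    (∀ Z : Matrix (Fin n) (Fin p) ℝ,
      (fun W : Matrix (Fin n) (Fin p) ℝ =>
          W - X * ((1 / 2 : ℝ) • ((Xᵀ * X)⁻¹ * Xᵀ * W - ((Xᵀ * X)⁻¹ * Xᵀ * W)ᵀ)))
        ((fun W : Matrix (Fin n) (Fin p) ℝ =>
          W - X * ((1 / 2 : ℝ) • ((Xᵀ * X)⁻¹ * Xᵀ * W - ((Xᵀ * X)⁻¹ * Xᵀ * W)ᵀ))) Z)
      = Z - X * ((1 / 2 : ℝ) • ((Xᵀ * X)⁻¹ * Xᵀ * Z - ((Xᵀ * X)⁻¹ * Xᵀ * Z)ᵀ))) ∧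
    Set.range (fun Z : Matrix (Fin n) (Fin p) ℝ =>
        Z - X * ((1 / 2 : ℝ) • ((Xᵀ * X)⁻¹ * Xᵀ * Z - ((Xᵀ * X)⁻¹ * Xᵀ * Z)ᵀ)))
      = {Y : Matrix (Fin n) (Fin p) ℝ |
          ∃ (S : Matrix (Fin p) (Fin p) ℝ) (W : Matrix (Fin n) (Fin p) ℝ),
            Sᵀ = S ∧ Xᵀ * W = 0 ∧ Y = X * S + W} := by
  have hdet : IsUnit (Xᵀ * X).det := (Matrix.isUnit_iff_isUnit_det _).mp hX
  have hinv : (Xᵀ * X)⁻¹ * (Xᵀ * X) = 1 := Matrix.nonsing_inv_mul _ hdet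
  have hinv' : (Xᵀ * X) * (Xᵀ * X)⁻¹ = 1 := Matrix.mul_nonsing_inv _ hdet
  set A : Matrix (Fin p) (Fin n) ℝ := (Xᵀ * X)⁻¹ * Xᵀ with hA
  have hAX : A * X = 1 := by rw [hA, Matrix.mul_assoc]; exact hinv
  -- key: A applied to P Z gives the symmetric part of A Z
  have key : ∀ Z : Matrix (Fin n) (Fin p) ℝ,
      A * (Z - X * ((1 / 2 : ℝ) • (A * Z - (A * Z)ᵀ)))
        = (1 / 2 : ℝ) • (A * Z + (A * Z)ᵀ) := by
    intro Z
    rw [Matrix.mul_sub, ← Matrix.mul_assoc, hAX, Matrix.one_mul]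
    module
  constructor
  · intro Z
    simp only
    have hsym : (A * (Z - X * ((1 / 2 : ℝ) • (A * Z - (A * Z)ᵀ))))ᵀ
        = A * (Z - X * ((1 / 2 : ℝ) • (A * Z - (A * Z)ᵀ))) := by
      rw [key Z, Matrix.transpose_smul, Matrix.transpose_add,
        Matrix.transpose_transpose, add_comm]
    rw [hsym, sub_self, smul_zero, Matrix.mul_zero, sub_zero]
  · ext Y
    simp only [Set.mem_range, Set.mem_setOf_eq]
    constructor
    · rintro ⟨Z, rfl⟩
      refine ⟨(1 / 2 : ℝ) • (A * Z + (A * Z)ᵀ), Z - X * (A * Z), ?_, ?_, ?_⟩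
      · rw [Matrix.transpose_smul, Matrix.transpose_add, Matrix.transpose_transpose,
          add_comm]
      · simp only [Matrix.mul_sub, hA, ← Matrix.mul_assoc, hinv', Matrix.one_mul,
          sub_self]
      · rw [Matrix.mul_smul, Matrix.mul_smul, Matrix.mul_sub, Matrix.mul_add,
          ← Matrix.mul_assoc]
        module
    · rintro ⟨S, W, hS, hW, rfl⟩
      refine ⟨X * S + W, ?_⟩
      have hAY : A * (X * S + W) = S := by
        rw [Matrix.mul_add, ← Matrix.mul_assoc, hAX, Matrix.one_mul, hA,
          Matrix.mul_assoc, hW, Matrix.mul_zero, add_zero]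
      rw [hAY, hS, sub_self, smul_zero, Matrix.mul_zero, sub_zero]
end

section
/- Let X ∈ ℝ^{n×p} be full rank and define the bilinear form ḡ_X(Z₁,Z₂) = tr(Z₁ᵀ(I − X(XᵀX)⁻¹Xᵀ)Z₂ + Z₁ᵀX(XᵀX)⁻²XᵀZ₂). Then ḡ_X is a symmetric positive-definite bilinear form on ℝ^{n×p}. -/
open Matrix

lemma tr_sq_nonneg {n p : ℕ} (A : Matrix (Fin n) (Fin p) ℝ) :
    0 ≤ Matrix.trace (Aᵀ * A) := by
  simp only [Matrix.trace, Matrix.diag, Matrix.mul_apply, Matrix.transpose_apply]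
  exact Finset.sum_nonneg fun j _ => Finset.sum_nonneg fun i _ => mul_self_nonneg _

lemma tr_sq_eq_zero {n p : ℕ} (A : Matrix (Fin n) (Fin p) ℝ)
    (h : Matrix.trace (Aᵀ * A) = 0) : A = 0 := by
  simp only [Matrix.trace, Matrix.diag, Matrix.mul_apply, Matrix.transpose_apply] at h
  ext i j
  have h1 := (Finset.sum_eq_zero_iff_of_nonneg
    (fun j _ => Finset.sum_nonneg fun i _ => mul_self_nonneg (A i j))).mp h j
    (Finset.mem_univ j)
  have h2 := (Finset.sum_eq_zero_iff_of_nonneg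
    (fun i _ => mul_self_nonneg (A i j))).mp h1 i (Finset.mem_univ i)
  have := mul_self_eq_zero.mp h2
  simpa using this

theorem oja_metric_spd {n p : ℕ}
    (X : Matrix (Fin n) (Fin p) ℝ) (hX : IsUnit (Xᵀ * X)) :
    (∀ Z₁ Z₂ : Matrix (Fin n) (Fin p) ℝ,
      Matrix.trace (Z₁ᵀ * ((1 - X * (Xᵀ * X)⁻¹ * Xᵀ) * Z₂)
          + Z₁ᵀ * (X * ((Xᵀ * X)⁻¹ * (Xᵀ * X)⁻¹) * Xᵀ * Z₂))
        = Matrix.trace (Z₂ᵀ * ((1 - X * (Xᵀ * X)⁻¹ * Xᵀ) * Z₁)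
          + Z₂ᵀ * (X * ((Xᵀ * X)⁻¹ * (Xᵀ * X)⁻¹) * Xᵀ * Z₁))) ∧
    (∀ (c : ℝ) (Z₁ Z₁' Z₂ : Matrix (Fin n) (Fin p) ℝ),
      Matrix.trace ((c • Z₁ + Z₁')ᵀ * ((1 - X * (Xᵀ * X)⁻¹ * Xᵀ) * Z₂)
          + (c • Z₁ + Z₁')ᵀ * (X * ((Xᵀ * X)⁻¹ * (Xᵀ * X)⁻¹) * Xᵀ * Z₂))
        = c * Matrix.trace (Z₁ᵀ * ((1 - X * (Xᵀ * X)⁻¹ * Xᵀ) * Z₂)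
              + Z₁ᵀ * (X * ((Xᵀ * X)⁻¹ * (Xᵀ * X)⁻¹) * Xᵀ * Z₂))
          + Matrix.trace (Z₁'ᵀ * ((1 - X * (Xᵀ * X)⁻¹ * Xᵀ) * Z₂)
              + Z₁'ᵀ * (X * ((Xᵀ * X)⁻¹ * (Xᵀ * X)⁻¹) * Xᵀ * Z₂))) ∧
    (∀ Z : Matrix (Fin n) (Fin p) ℝ, Z ≠ 0 →
      0 < Matrix.trace (Zᵀ * ((1 - X * (Xᵀ * X)⁻¹ * Xᵀ) * Z)
          + Zᵀ * (X * ((Xᵀ * X)⁻¹ * (Xᵀ * X)⁻¹) * Xᵀ * Z))) := by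
  set A := (Xᵀ * X)⁻¹ with hA
  have hdet : IsUnit (Xᵀ * X).det := (Matrix.isUnit_iff_isUnit_det _).mp hX
  have hAsym : Aᵀ = A := by
    rw [hA, Matrix.transpose_nonsing_inv, Matrix.transpose_mul, Matrix.transpose_transpose]
  have hAinv : A * (Xᵀ * X) = 1 := Matrix.nonsing_inv_mul _ hdet
  have hAinv' : (Xᵀ * X) * A = 1 := Matrix.mul_nonsing_inv _ hdet
  set P := X * A * Xᵀ with hP
  have hPsym : Pᵀ = P := by
    simp [hP, Matrix.transpose_mul, hAsym, Matrix.mul_assoc]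
  have key : Xᵀ * (X * (A * Xᵀ)) = Xᵀ := by
    rw [← Matrix.mul_assoc, ← Matrix.mul_assoc, hAinv', Matrix.one_mul]
  have hPP : P * P = P := by
    rw [hP]
    simp only [Matrix.mul_assoc]
    rw [key]
  have hSsym : (1 - P)ᵀ = 1 - P := by
    rw [Matrix.transpose_sub, Matrix.transpose_one, hPsym]
  have hSS : (1 - P) * (1 - P) = 1 - P := by
    rw [Matrix.sub_mul, Matrix.mul_sub, Matrix.mul_sub, hPP]
    simp
  have hMsym : (X * (A * A) * Xᵀ)ᵀ = X * (A * A) * Xᵀ := by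
    simp [Matrix.transpose_mul, hAsym, Matrix.mul_assoc]
  refine ⟨?_, ?_, ?_⟩
  · intro Z₁ Z₂
    have h1 : Matrix.trace (Z₁ᵀ * ((1 - P) * Z₂)) = Matrix.trace (Z₂ᵀ * ((1 - P) * Z₁)) := by
      rw [← Matrix.trace_transpose (Z₁ᵀ * ((1 - P) * Z₂))]
      simp [Matrix.transpose_mul, hSsym, Matrix.mul_assoc]
    have h2 : Matrix.trace (Z₁ᵀ * (X * (A * A) * Xᵀ * Z₂))
        = Matrix.trace (Z₂ᵀ * (X * (A * A) * Xᵀ * Z₁)) := by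
      rw [← Matrix.trace_transpose (Z₁ᵀ * (X * (A * A) * Xᵀ * Z₂))]
      simp [Matrix.transpose_mul, hAsym, Matrix.mul_assoc]
    rw [Matrix.trace_add, Matrix.trace_add, h1, h2]
  · intro c Z₁ Z₁' Z₂
    simp only [Matrix.transpose_add, Matrix.transpose_smul, Matrix.add_mul, Matrix.smul_mul,
      Matrix.trace_add, Matrix.trace_smul, smul_eq_mul]
    ring
  · intro Z hZ
    set B := (1 - P) * Z with hB
    set C := A * Xᵀ * Z with hC
    have e1 : Zᵀ * ((1 - P) * Z) = Bᵀ * B := by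
      rw [hB, Matrix.transpose_mul, hSsym, Matrix.mul_assoc,
        ← Matrix.mul_assoc (1 - P) (1 - P) Z, hSS]
    have e2 : Zᵀ * (X * (A * A) * Xᵀ * Z) = Cᵀ * C := by
      rw [hC]
      simp [Matrix.transpose_mul, hAsym, Matrix.mul_assoc]
    rw [e1, e2, Matrix.trace_add]
    rcases lt_or_eq_of_le (add_nonneg (tr_sq_nonneg B) (tr_sq_nonneg C)) with h | h
    · exact h
    exfalso
    have hB0 : Matrix.trace (Bᵀ * B) = 0 :=
      le_antisymm (by linarith [tr_sq_nonneg C]) (tr_sq_nonneg B)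
    have hC0 : Matrix.trace (Cᵀ * C) = 0 := by linarith
    have hBz : B = 0 := tr_sq_eq_zero _ hB0
    have hCz : C = 0 := tr_sq_eq_zero _ hC0
    have hXZ : Xᵀ * Z = 0 := by
      have h := congrArg (fun M => (Xᵀ * X) * M) hCz
      simp only [hC, Matrix.mul_zero] at h
      rwa [← Matrix.mul_assoc, ← Matrix.mul_assoc, hAinv', Matrix.one_mul] at h
    have hPZ : P * Z = 0 := by
      rw [hP, Matrix.mul_assoc (X * A) Xᵀ Z, hXZ, Matrix.mul_zero]
    have : Z = 0 := by
      have := hBz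
      rw [hB, Matrix.sub_mul, Matrix.one_mul, hPZ, sub_zero] at this
      exact this
    exact hZ this
end

section
/- Let X ∈ ℝ^{n×p} be full rank. With respect to the metric ḡ_X(Z₁,Z₂) = tr(Z₁ᵀ(I − X(XᵀX)⁻¹Xᵀ)Z₂ + Z₁ᵀX(XᵀX)⁻²XᵀZ₂), the orthogonal complement of the vertical space V_X = {XΩ : Ωᵀ = −Ω} is exactly H_X = {XS + W : Sᵀ = S, XᵀW = 0}. -/
open Matrix

theorem oja_horizontal_is_orthogonal_complement {n p : ℕ}
    (X : Matrix (Fin n) (Fin p) ℝ) (hX : IsUnit (Xᵀ * X)) :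
    {Z : Matrix (Fin n) (Fin p) ℝ |
        ∀ W : Matrix (Fin n) (Fin p) ℝ,
          (∃ Ω : Matrix (Fin p) (Fin p) ℝ, Ωᵀ = -Ω ∧ W = X * Ω) →
          Matrix.trace (Wᵀ * ((1 - X * (Xᵀ * X)⁻¹ * Xᵀ) * Z)
            + Wᵀ * (X * ((Xᵀ * X)⁻¹ * (Xᵀ * X)⁻¹) * Xᵀ * Z)) = 0}
      = {Z : Matrix (Fin n) (Fin p) ℝ |
          ∃ (S : Matrix (Fin p) (Fin p) ℝ) (W : Matrix (Fin n) (Fin p) ℝ),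
            Sᵀ = S ∧ Xᵀ * W = 0 ∧ Z = X * S + W} := by
  have hdet : IsUnit (Xᵀ * X).det := (Matrix.isUnit_iff_isUnit_det _).mp hX
  have hinv : (Xᵀ * X) * (Xᵀ * X)⁻¹ = 1 := Matrix.mul_nonsing_inv _ hdet
  have hinv' : (Xᵀ * X)⁻¹ * (Xᵀ * X) = 1 := Matrix.nonsing_inv_mul _ hdet
  have key : ∀ (Ω : Matrix (Fin p) (Fin p) ℝ) (Z : Matrix (Fin n) (Fin p) ℝ),
      Matrix.trace ((X * Ω)ᵀ * ((1 - X * (Xᵀ * X)⁻¹ * Xᵀ) * Z)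
        + (X * Ω)ᵀ * (X * ((Xᵀ * X)⁻¹ * (Xᵀ * X)⁻¹) * Xᵀ * Z))
      = Matrix.trace (Ωᵀ * ((Xᵀ * X)⁻¹ * (Xᵀ * Z))) := by
    intro Ω Z
    congr 1
    have h1 : (X * Ω)ᵀ * ((1 - X * (Xᵀ * X)⁻¹ * Xᵀ) * Z)
        = Ωᵀ * (Xᵀ * Z) - Ωᵀ * ((Xᵀ * X) * ((Xᵀ * X)⁻¹ * (Xᵀ * Z))) := by
      simp only [Matrix.transpose_mul, Matrix.sub_mul, Matrix.one_mul,
        Matrix.mul_sub, Matrix.mul_assoc]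
    have h2 : (X * Ω)ᵀ * (X * ((Xᵀ * X)⁻¹ * (Xᵀ * X)⁻¹) * Xᵀ * Z)
        = Ωᵀ * ((Xᵀ * X) * ((Xᵀ * X)⁻¹ * ((Xᵀ * X)⁻¹ * (Xᵀ * Z)))) := by
      simp only [Matrix.transpose_mul, Matrix.mul_assoc]
    rw [h1, h2, ← Matrix.mul_assoc (Xᵀ * X), hinv, Matrix.one_mul,
      ← Matrix.mul_assoc (Xᵀ * X), hinv, Matrix.one_mul]
    abel
  ext Z
  simp only [Set.mem_setOf_eq]
  constructor
  · intro h
    set M : Matrix (Fin p) (Fin p) ℝ := (Xᵀ * X)⁻¹ * (Xᵀ * Z) with hM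
    have hskew : (M - Mᵀ)ᵀ = -(M - Mᵀ) := by
      simp [Matrix.transpose_sub]
    have h0 : Matrix.trace ((M - Mᵀ)ᵀ * M) = 0 := by
      have := h (X * (M - Mᵀ)) ⟨M - Mᵀ, hskew, rfl⟩
      rwa [key] at this
    -- show trace((M-Mᵀ)ᵀ (M-Mᵀ)) = 2 * trace((M-Mᵀ)ᵀ M)
    have h1 : Matrix.trace ((M - Mᵀ)ᵀ * (M - Mᵀ)) = 0 := by
      have e1 : Matrix.trace ((M - Mᵀ)ᵀ * Mᵀ) = - Matrix.trace ((M - Mᵀ)ᵀ * M) :=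
        calc Matrix.trace ((M - Mᵀ)ᵀ * Mᵀ)
            = Matrix.trace (((M - Mᵀ)ᵀ * Mᵀ)ᵀ) := (Matrix.trace_transpose _).symm
          _ = Matrix.trace (M * (M - Mᵀ)) := by
              rw [Matrix.transpose_mul, Matrix.transpose_transpose,
                Matrix.transpose_transpose]
          _ = Matrix.trace ((M - Mᵀ) * M) := Matrix.trace_mul_comm _ _
          _ = Matrix.trace (-(M - Mᵀ)ᵀ * M) := by rw [hskew, neg_neg]
          _ = - Matrix.trace ((M - Mᵀ)ᵀ * M) := by
              rw [Matrix.neg_mul, Matrix.trace_neg]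
      rw [Matrix.mul_sub, Matrix.trace_sub, h0, e1, h0]
      ring
    have hzero : M - Mᵀ = 0 := by
      have hsum : ∑ j, ∑ i, ((M - Mᵀ) i j) ^ 2 = 0 := by
        rw [← h1]
        simp [Matrix.trace, Matrix.diag, Matrix.mul_apply, sq]
      ext i j
      have hjs := (Finset.sum_eq_zero_iff_of_nonneg (fun j _ =>
        Finset.sum_nonneg (fun i _ => sq_nonneg _))).mp hsum j (Finset.mem_univ j)
      have his := (Finset.sum_eq_zero_iff_of_nonneg (fun i _ => sq_nonneg _)).mp
        hjs i (Finset.mem_univ i)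
      simpa using pow_eq_zero_iff (n := 2) (by norm_num) |>.mp his
    have hMsym : Mᵀ = M := by
      have := sub_eq_zero.mp hzero
      exact this.symm
    refine ⟨M, Z - X * M, hMsym, ?_, by abel⟩
    rw [Matrix.mul_sub, ← Matrix.mul_assoc, hM, ← Matrix.mul_assoc, hinv,
      Matrix.one_mul, sub_self]
  · rintro ⟨S, W, hS, hW, rfl⟩ V ⟨Ω, hΩ, rfl⟩
    rw [key]
    have hXZ : Xᵀ * (X * S + W) = (Xᵀ * X) * S := by
      rw [Matrix.mul_add, hW, add_zero, Matrix.mul_assoc]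
    rw [hXZ, ← Matrix.mul_assoc (Xᵀ * X)⁻¹ (Xᵀ * X) S, hinv', Matrix.one_mul]
    have e1 : Matrix.trace (Ωᵀ * S) = Matrix.trace (Ω * S) := by
      conv_lhs => rw [← Matrix.trace_transpose, Matrix.transpose_mul,
        Matrix.transpose_transpose, hS, Matrix.trace_mul_comm]
    have e2 : Matrix.trace (Ωᵀ * S) = - Matrix.trace (Ω * S) := by
      rw [hΩ, Matrix.neg_mul, Matrix.trace_neg]
    linarith [e1, e2]
end

section
/- Let A be symmetric positive definite and X ∈ ℝ^{n×p} full rank. If AX − X XᵀAX = XΩ for some skew-symmetric Ω, then XᵀX = I_p and A·col(X) ⊆ col(X). -/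
open Matrix

theorem oja_projected_zero_characterization {n p : ℕ}
    (A : Matrix (Fin n) (Fin n) ℝ) (X : Matrix (Fin n) (Fin p) ℝ)
    (Ω : Matrix (Fin p) (Fin p) ℝ)
    (hA : A.PosDef) (hX : IsUnit (Xᵀ * X)) (hΩ : Ωᵀ = -Ω)
    (h : A * X - X * (Xᵀ * A * X) = X * Ω) :
    Xᵀ * X = 1 ∧
      Submodule.map A.mulVecLin (LinearMap.range X.mulVecLin) ≤
        LinearMap.range X.mulVecLin := by
  classical
  set M : Matrix (Fin p) (Fin p) ℝ := Xᵀ * X with hM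
  set S : Matrix (Fin p) (Fin p) ℝ := Xᵀ * A * X with hSdef
  letI : Invertible M := hX.nonempty_invertible.some
  have hAX : A * X = X * (S + Ω) := by
    rw [Matrix.mul_add, add_comm]
    exact sub_eq_iff_eq_add.mp h
  have hAsymm : Aᵀ = A := by
    have := hA.isHermitian
    rwa [Matrix.IsHermitian, conjTranspose_eq_transpose_of_trivial] at this
  have hMsymm : Mᵀ = M := by
    rw [hM, Matrix.transpose_mul, Matrix.transpose_transpose]
  have hSsymm : Sᵀ = S := by
    rw [hSdef, Matrix.transpose_mul, Matrix.transpose_mul, Matrix.transpose_transpose,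
      hAsymm, Matrix.mul_assoc]
  have hXinj : ∀ v : Fin p → ℝ, X *ᵥ v = 0 → v = 0 := by
    intro v hv
    have hMv : M *ᵥ v = 0 := by
      rw [hM, ← Matrix.mulVec_mulVec, hv, Matrix.mulVec_zero]
    calc v = (⅟M * M) *ᵥ v := by rw [invOf_mul_self, Matrix.one_mulVec]
    _ = ⅟M *ᵥ (M *ᵥ v) := by rw [Matrix.mulVec_mulVec]
    _ = 0 := by rw [hMv, Matrix.mulVec_zero]
  have hSpd : S.PosDef := by
    refine Matrix.PosDef.of_dotProduct_mulVec_pos ?_ (fun v hv => ?_)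
    · rw [Matrix.IsHermitian, conjTranspose_eq_transpose_of_trivial, hSsymm]
    · have hXv : X *ᵥ v ≠ 0 := fun hc => hv (hXinj v hc)
      have := hA.dotProduct_mulVec_pos hXv
      simpa [hSdef, star_trivial, ← Matrix.mulVec_mulVec, Matrix.dotProduct_mulVec,
        Matrix.vecMul_transpose] using this
  have hS : S - M * S = M * Ω := by
    have := congrArg (fun Y => Xᵀ * Y) h
    simpa only [Matrix.mul_sub, ← Matrix.mul_assoc, ← hM, ← hSdef] using this
  set N : Matrix (Fin p) (Fin p) ℝ := ⅟M - 1 with hN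
  have hΩeq : Ω = N * S := by
    calc Ω = ⅟M * (M * Ω) := by
          rw [← Matrix.mul_assoc ⅟M M Ω, invOf_mul_self, Matrix.one_mul]
    _ = ⅟M * (S - M * S) := by rw [hS]
    _ = ⅟M * S - ⅟M * M * S := by
          rw [Matrix.mul_sub, Matrix.mul_assoc ⅟M M S]
    _ = N * S := by
          rw [invOf_mul_self, Matrix.one_mul, hN, Matrix.sub_mul, Matrix.one_mul]
  have hMinvT : (⅟M)ᵀ = ⅟M := by
    have h1 : (⅟M)ᵀ * M = 1 := by
      calc (⅟M)ᵀ * M = (Mᵀ * ⅟M)ᵀ := by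
            rw [Matrix.transpose_mul, Matrix.transpose_transpose]
      _ = 1 := by rw [hMsymm, mul_invOf_self, Matrix.transpose_one]
    calc (⅟M)ᵀ = (⅟M)ᵀ * (M * ⅟M) := by rw [mul_invOf_self, Matrix.mul_one]
    _ = ((⅟M)ᵀ * M) * ⅟M := by rw [Matrix.mul_assoc (⅟M)ᵀ M ⅟M]
    _ = ⅟M := by rw [h1, Matrix.one_mul]
  have hNsymm : Nᵀ = N := by
    rw [hN, Matrix.transpose_sub, hMinvT, Matrix.transpose_one]
  have hanti : N * S = -(S * N) := by
    have h1 : Ωᵀ = S * N := by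
      rw [hΩeq, Matrix.transpose_mul, hNsymm, hSsymm]
    rw [← hΩeq, ← h1, hΩ, neg_neg]
  have htr : (N * S * N).trace = 0 := by
    have e1 : (N * S * N).trace = (N * N * S).trace := by
      rw [Matrix.trace_mul_cycle N S N, Matrix.mul_assoc N N S]
    have e2 : N * S * N = -(S * (N * N)) := by
      rw [hanti, Matrix.neg_mul, Matrix.mul_assoc S N N]
    have e3 : (N * S * N).trace = -((N * N * S).trace) := by
      rw [e2, Matrix.trace_neg, Matrix.trace_mul_comm S (N * N)]
    rw [e1] at e3
    linarith
  have hdiag : ∀ j : Fin p, (N * S * N) j j =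
      (N *ᵥ Pi.single j 1) ⬝ᵥ S *ᵥ (N *ᵥ Pi.single j 1) := by
    intro j
    have h1 : (N *ᵥ Pi.single j 1) ⬝ᵥ S *ᵥ (N *ᵥ Pi.single j 1)
        = Pi.single j 1 ⬝ᵥ (N * S * N) *ᵥ Pi.single j 1 := by
      conv_lhs => rw [Matrix.dotProduct_mulVec, ← Matrix.vecMul_transpose, hNsymm,
        Matrix.vecMul_vecMul, ← Matrix.dotProduct_mulVec, ← Matrix.mulVec_transpose, hNsymm,
        Matrix.mulVec_mulVec]
    rw [h1, single_dotProduct, one_mul, Matrix.mulVec_single_one,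
      Matrix.col_apply]
  have hnonneg : ∀ j : Fin p, 0 ≤ (N * S * N) j j := by
    intro j
    rw [hdiag j]
    have := hSpd.posSemidef.dotProduct_mulVec_nonneg (N *ᵥ Pi.single j 1)
    simpa [star_trivial] using this
  have hdiag0 : ∀ j : Fin p, (N * S * N) j j = 0 := by
    have hsum : ∑ j : Fin p, (N * S * N) j j = 0 := htr
    intro j
    exact (Finset.sum_eq_zero_iff_of_nonneg
      (fun i _ => hnonneg i)).mp hsum j (Finset.mem_univ j)
  have hN0 : N = 0 := by
    ext i j
    have hq : N *ᵥ Pi.single j 1 = 0 := by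
      by_contra hq
      have hpos := hSpd.dotProduct_mulVec_pos hq
      rw [star_trivial] at hpos
      have h0 : (N *ᵥ Pi.single j 1) ⬝ᵥ S *ᵥ (N *ᵥ Pi.single j 1) = 0 :=
        (hdiag j).symm.trans (hdiag0 j)
      linarith
    have := congrFun hq i
    simpa [Matrix.mulVec_single_one] using this
  have hMinv1 : (⅟M : Matrix (Fin p) (Fin p) ℝ) = 1 := by
    have : ⅟M - 1 = 0 := hN ▸ hN0
    exact sub_eq_zero.mp this
  have hM1 : M = 1 := by
    have h1 : M * ⅟M = 1 := mul_invOf_self M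
    rw [hMinv1, Matrix.mul_one] at h1
    exact h1
  refine ⟨hM1, ?_⟩
  rintro y ⟨-, ⟨v, rfl⟩, rfl⟩
  refine ⟨(S + Ω) *ᵥ v, ?_⟩
  simp only [Matrix.mulVecLin_apply, Matrix.mulVec_mulVec, ← hAX]
end

section
/- Let A be symmetric positive definite, X ∈ ℝ^{n×p} full rank, and P^h_X(Z) = Z − X·skew((XᵀX)⁻¹XᵀZ). Then P^h_X(F(X)) = 0 if and only if F(X) = 0, where F(X) = AX − X XᵀAX. In particular, the full-rank zeros of the projected Oja vector field coincide with the full-rank zeros of Oja's vector field. -/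
open Matrix

/-- Auxiliary: over ℝ, if `trace (Aᵀ * A) = 0` then `A = 0`. -/
lemma trace_transpose_mul_self_eq_zero_aux {m p : ℕ} {A : Matrix (Fin m) (Fin p) ℝ}
    (h : (Aᵀ * A).trace = 0) : A = 0 := by
  have hsum : ∑ j, ∑ i, A i j * A i j = 0 := by
    simpa [Matrix.trace, Matrix.diag, Matrix.mul_apply] using h
  have h1 := (Finset.sum_eq_zero_iff_of_nonneg (fun j _ =>
    Finset.sum_nonneg fun i _ => mul_self_nonneg (A i j))).mp hsum
  ext i j
  have h2 := (Finset.sum_eq_zero_iff_of_nonneg (fun i _ =>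
    mul_self_nonneg (A i j))).mp (h1 j (Finset.mem_univ j)) i (Finset.mem_univ i)
  simpa using mul_self_eq_zero.mp h2

theorem oja_projected_zero_iff_zero {n p : ℕ}
    (A : Matrix (Fin n) (Fin n) ℝ) (X : Matrix (Fin n) (Fin p) ℝ)
    (hA : A.PosDef) (hX : IsUnit (Xᵀ * X)) :
    (A * X - X * (Xᵀ * A * X))
        - X * ((1 / 2 : ℝ) •
            ((Xᵀ * X)⁻¹ * Xᵀ * (A * X - X * (Xᵀ * A * X))
              - ((Xᵀ * X)⁻¹ * Xᵀ * (A * X - X * (Xᵀ * A * X)))ᵀ)) = 0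
      ↔ A * X - X * (Xᵀ * A * X) = 0 := by
  have hAt : Aᵀ = A := by
    have := hA.isHermitian
    rwa [Matrix.IsHermitian, conjTranspose_eq_transpose_of_trivial] at this
  set G : Matrix (Fin p) (Fin p) ℝ := Xᵀ * X with hGdef
  set M : Matrix (Fin p) (Fin p) ℝ := Xᵀ * A * X with hMdef
  set F : Matrix (Fin n) (Fin p) ℝ := A * X - X * M with hFdef
  have hGdet : IsUnit G.det := (Matrix.isUnit_iff_isUnit_det G).mp hX
  have hGG : G * G⁻¹ = 1 := Matrix.mul_nonsing_inv G hGdet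
  have hGG' : G⁻¹ * G = 1 := Matrix.nonsing_inv_mul G hGdet
  have hGt : Gᵀ = G := by rw [hGdef, Matrix.transpose_mul, Matrix.transpose_transpose]
  have hMt : Mᵀ = M := by
    rw [hMdef, Matrix.transpose_mul, Matrix.transpose_mul, Matrix.transpose_transpose, hAt,
      Matrix.mul_assoc]
  have hGit : (G⁻¹)ᵀ = G⁻¹ := by rw [Matrix.transpose_nonsing_inv, hGt]
  -- compute Xᵀ * F
  have hXF : Xᵀ * F = M - G * M := by
    rw [hFdef, Matrix.mul_sub, ← Matrix.mul_assoc, ← Matrix.mul_assoc, hMdef]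
  -- the skew term simplifies
  have hB : G⁻¹ * Xᵀ * F = G⁻¹ * M - M := by
    rw [Matrix.mul_assoc G⁻¹ Xᵀ F, hXF, Matrix.mul_sub, ← Matrix.mul_assoc G⁻¹ G M, hGG',
      Matrix.one_mul]
  have hS : G⁻¹ * Xᵀ * F - (G⁻¹ * Xᵀ * F)ᵀ = G⁻¹ * M - M * G⁻¹ := by
    rw [hB, Matrix.transpose_sub, Matrix.transpose_mul, hMt, hGit]
    abel
  constructor
  · intro h
    rw [hS, sub_eq_zero] at h
    -- h : F = X * ((1/2) • (G⁻¹*M - M*G⁻¹))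
    -- multiply on the left by Xᵀ
    have h2 : M - G * M = (1 / 2 : ℝ) • (M - G * (M * G⁻¹)) := by
      have h2' := congrArg (fun Y => Xᵀ * Y) h
      simp only [Matrix.mul_smul] at h2'
      rw [hXF] at h2'
      rw [h2']
      congr 1
      rw [← Matrix.mul_assoc, hGdef]
      rw [← hGdef, Matrix.mul_sub, ← Matrix.mul_assoc, ← Matrix.mul_assoc, hGG, Matrix.one_mul]
    have h3 : (2 : ℝ) • (M - G * M) = M - G * (M * G⁻¹) := by
      rw [h2, smul_smul]
      norm_num
    -- left-multiply by G⁻¹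
    have h4 : (2 : ℝ) • (G⁻¹ * M - M) = G⁻¹ * M - M * G⁻¹ := by
      have h4' := congrArg (fun Y => G⁻¹ * Y) h3
      simp only [Matrix.mul_smul, Matrix.mul_sub, ← Matrix.mul_assoc, hGG',
        Matrix.one_mul] at h4'
      exact h4'
    have h4' : M * G⁻¹ = G⁻¹ * M - (2 : ℝ) • (G⁻¹ * M - M) := by
      rw [h4]; abel
    set K : Matrix (Fin p) (Fin p) ℝ := G⁻¹ - 1 with hKdef
    have hKt : Kᵀ = K := by rw [hKdef, Matrix.transpose_sub, hGit, Matrix.transpose_one]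
    have hKM : K * M + M * K = 0 := by
      rw [hKdef, Matrix.sub_mul, Matrix.mul_sub, Matrix.one_mul, Matrix.mul_one, h4',
        smul_sub, two_smul, two_smul]
      abel
    have hMK : M * K = -(K * M) := eq_neg_of_add_eq_zero_right hKM
    -- M is positive semidefinite: M = Lᵀ * L
    have hMpsd : M.PosSemidef := by
      have := hA.posSemidef.conjTranspose_mul_mul_same X
      rw [conjTranspose_eq_transpose_of_trivial] at this
      rw [hMdef]
      exact this
    obtain ⟨L, hL⟩ : ∃ L : Matrix (Fin p) (Fin p) ℝ, M = Lᴴ * L := by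
      classical
      open scoped MatrixOrder in
      obtain ⟨Y, hY, -, hYY⟩ := CFC.exists_sqrt_of_isSelfAdjoint_of_quasispectrumRestricts
        hMpsd.isHermitian (QuasispectrumRestricts.nnreal_of_nonneg hMpsd.nonneg)
      exact ⟨Y, by show M = star Y * Y; rw [hY.star_eq]; exact hYY.symm⟩
    have hLt : M = Lᵀ * L := by rwa [conjTranspose_eq_transpose_of_trivial] at hL
    -- trace argument: trace (K*M*K) = 0
    have e1 : (L * K)ᵀ * (L * K) = K * (M * K) := by
      rw [Matrix.transpose_mul, hKt, hLt]
      simp only [Matrix.mul_assoc]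
    have t1 : (K * (M * K)).trace = -((K * (K * M)).trace) := by
      rw [hMK, Matrix.mul_neg, Matrix.trace_neg]
    have t2 : (K * (K * M)).trace = (K * (M * K)).trace := by
      rw [Matrix.trace_mul_comm, Matrix.mul_assoc]
    have t0 : ((L * K)ᵀ * (L * K)).trace = 0 := by
      rw [e1]
      linarith [t1, t2]
    have hLK : L * K = 0 := trace_transpose_mul_self_eq_zero_aux t0
    have hMK0 : M * K = 0 := by rw [hLt, Matrix.mul_assoc, hLK, Matrix.mul_zero]
    have hKM0 : K * M = 0 := by
      have : (M * K)ᵀ = K * M := by rw [Matrix.transpose_mul, hKt, hMt]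
      rw [← this, hMK0, Matrix.transpose_zero]
    have hSz : G⁻¹ * M - M * G⁻¹ = 0 := by
      have hGK : G⁻¹ = K + 1 := by rw [hKdef]; abel
      rw [hGK, Matrix.add_mul, Matrix.mul_add, hKM0, hMK0, Matrix.one_mul, Matrix.mul_one]
      abel
    rw [hSz] at h
    simpa using h
  · intro h
    have hF0 : F = 0 := h
    rw [hF0]
    simp
end

section
/- Let A be symmetric positive definite, X_* ∈ ℝ^{n×p} with X_*ᵀX_* = I and AX_* = X_* X_*ᵀAX_*. For Z of the form Z = X_*S with S symmetric, the projected Jacobian satisfies P^s_{X_*}(D(P^h F)(X_*)[X_*S]) = −X_*(S·X_*ᵀAX_* + X_*ᵀAX_*·S), and this map S ↦ S M + M S (with M = X_*ᵀAX_* positive definite) is invertible on symmetric matrices. -/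
open Matrix

attribute [local instance] Matrix.frobeniusNormedAddCommGroup Matrix.frobeniusNormedSpace
attribute [local instance] Matrix.frobeniusNormedRing Matrix.frobeniusNormedAlgebra


noncomputable def mCLM (a b c : ℕ) :
    Matrix (Fin a) (Fin b) ℝ →L[ℝ] Matrix (Fin b) (Fin c) ℝ →L[ℝ] Matrix (Fin a) (Fin c) ℝ :=
  LinearMap.toContinuousLinearMap <|
    (LinearMap.toContinuousLinearMap (𝕜 := ℝ)
        (E := Matrix (Fin b) (Fin c) ℝ) (F' := Matrix (Fin a) (Fin c) ℝ)).toLinearMap.comp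
      (LinearMap.mk₂ ℝ (· * ·) Matrix.add_mul (fun r P Q => Matrix.smul_mul r P Q)
        Matrix.mul_add (fun r P Q => Matrix.mul_smul P r Q))

@[simp] lemma mCLM_apply {a b c : ℕ} (P : Matrix (Fin a) (Fin b) ℝ)
    (Q : Matrix (Fin b) (Fin c) ℝ) : mCLM a b c P Q = P * Q := rfl

noncomputable def tCLM (a b : ℕ) :
    Matrix (Fin a) (Fin b) ℝ →L[ℝ] Matrix (Fin b) (Fin a) ℝ :=
  LinearMap.toContinuousLinearMap (Matrix.transposeLinearEquiv (Fin a) (Fin b) ℝ ℝ).toLinearMap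

@[simp] lemma tCLM_apply {a b : ℕ} (P : Matrix (Fin a) (Fin b) ℝ) : tCLM a b P = Pᵀ := rfl

theorem hasFDerivAt_matmul {a b c : ℕ} {E : Type*} [NormedAddCommGroup E] [NormedSpace ℝ E]
    {f : E → Matrix (Fin a) (Fin b) ℝ} {g : E → Matrix (Fin b) (Fin c) ℝ}
    {f' : E →L[ℝ] Matrix (Fin a) (Fin b) ℝ} {g' : E →L[ℝ] Matrix (Fin b) (Fin c) ℝ} {x : E}
    (hf : HasFDerivAt f f' x) (hg : HasFDerivAt g g' x) :
    HasFDerivAt (fun y => f y * g y)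
      ((mCLM a b c).precompR E (f x) g' + (mCLM a b c).precompL E f' (g x)) x :=
  (mCLM a b c).hasFDerivAt_of_bilinear hf hg

@[simp] lemma precompR_matmul_apply {a b c : ℕ} {E : Type*} [NormedAddCommGroup E]
    [NormedSpace ℝ E] (P : Matrix (Fin a) (Fin b) ℝ)
    (g' : E →L[ℝ] Matrix (Fin b) (Fin c) ℝ) (z : E) :
    (mCLM a b c).precompR E P g' z = P * g' z := rfl

@[simp] lemma precompL_matmul_apply {a b c : ℕ} {E : Type*} [NormedAddCommGroup E]
    [NormedSpace ℝ E] (Q : Matrix (Fin b) (Fin c) ℝ)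
    (f' : E →L[ℝ] Matrix (Fin a) (Fin b) ℝ) (z : E) :
    (mCLM a b c).precompL E f' Q z = f' z * Q := rfl


theorem sylvester_inj {p : ℕ} {M S : Matrix (Fin p) (Fin p) ℝ} (hM : M.PosDef)
    (hS : Sᵀ = S) (h : S * M + M * S = 0) : S = 0 := by
  have hQ : (Sᵀ * M * S).PosSemidef := by
    simpa [conjTranspose_eq_transpose_of_trivial] using
      hM.posSemidef.conjTranspose_mul_mul_same S
  have htr : (Sᵀ * M * S).trace = 0 := by
    have h1 : (Sᵀ * (S * M) + Sᵀ * (M * S)).trace = 0 := by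
      rw [← Matrix.mul_add, h, Matrix.mul_zero, Matrix.trace_zero]
    rw [Matrix.trace_add] at h1
    have e1 : (Sᵀ * (S * M)).trace = (Sᵀ * M * S).trace := by
      rw [hS, Matrix.trace_mul_comm S (S*M)]
    have e2 : (Sᵀ * (M * S)).trace = (Sᵀ * M * S).trace := by rw [Matrix.mul_assoc]
    rw [e1, e2] at h1
    linarith
  have hdiag : ∀ i, (Sᵀ * M * S) i i = 0 := by
    intro i
    have hnn : ∀ j ∈ Finset.univ, 0 ≤ (Sᵀ * M * S).diag j := fun j _ => by
      simpa using hQ.dotProduct_mulVec_nonneg (Pi.single j 1)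
    have := (Finset.sum_eq_zero_iff_of_nonneg hnn).mp (by simpa [Matrix.trace] using htr)
      i (Finset.mem_univ i)
    simpa [Matrix.diag] using this
  have hcol : ∀ j, S *ᵥ Pi.single j 1 = 0 := by
    intro j
    by_contra hne
    have hpos := hM.dotProduct_mulVec_pos hne
    have : star (S *ᵥ Pi.single j 1) ⬝ᵥ (M *ᵥ (S *ᵥ Pi.single j 1))
        = (Sᵀ * M * S) j j := by
      have : star (Pi.single j (1:ℝ)) ⬝ᵥ ((Sᵀ * M * S) *ᵥ Pi.single j 1)
          = (Sᵀ * M * S) j j := by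
        simp [mulVec_single, dotProduct, Pi.single_apply]
      rw [← this]
      simp only [star_mulVec, dotProduct_mulVec, vecMul_vecMul]
      simp [conjTranspose_eq_transpose_of_trivial]
    rw [this, hdiag j] at hpos
    exact lt_irrefl _ hpos
  ext i j
  have := congrFun (hcol j) i
  simpa [mulVec_single] using this

theorem sylvester_exun {p : ℕ} {M : Matrix (Fin p) (Fin p) ℝ} (hM : M.PosDef)
    (hMt : Mᵀ = M) (T : Matrix (Fin p) (Fin p) ℝ) (hT : Tᵀ = T) :
    ∃! S : Matrix (Fin p) (Fin p) ℝ, Sᵀ = S ∧ S * M + M * S = T := by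
  classical
  let V : Submodule ℝ (Matrix (Fin p) (Fin p) ℝ) :=
    { carrier := {S | Sᵀ = S}
      add_mem' := fun {a b} ha hb => by
        simp only [Set.mem_setOf_eq] at *; rw [Matrix.transpose_add, ha, hb]
      zero_mem' := Matrix.transpose_zero
      smul_mem' := fun c {a} ha => by
        simp only [Set.mem_setOf_eq] at *; rw [Matrix.transpose_smul, ha] }
  let φ : V →ₗ[ℝ] V :=
    { toFun := fun S => ⟨S.1 * M + M * S.1, by
        have hs : (S.1)ᵀ = S.1 := S.2
        show (S.1 * M + M * S.1)ᵀ = _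
        rw [Matrix.transpose_add, Matrix.transpose_mul, Matrix.transpose_mul, hs, hMt]
        exact add_comm _ _⟩
      map_add' := fun a b => by
        ext : 1
        show (a.1 + b.1) * M + M * (a.1 + b.1) = _
        simp [Matrix.add_mul, Matrix.mul_add]; abel
      map_smul' := fun c a => by
        ext : 1
        show (c • a.1) * M + M * (c • a.1) = _
        simp [Matrix.smul_mul, Matrix.mul_smul, smul_add] }
  have hinj : Function.Injective φ := by
    rw [← LinearMap.ker_eq_bot, LinearMap.ker_eq_bot']
    intro S hS0
    have h0 : S.1 * M + M * S.1 = 0 := congrArg Subtype.val hS0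
    exact Subtype.ext (sylvester_inj hM S.2 h0)
  have hsurj : Function.Surjective φ := (LinearMap.injective_iff_surjective).mp hinj
  obtain ⟨S, hSeq⟩ := hsurj ⟨T, hT⟩
  refine ⟨S.1, ⟨S.2, congrArg Subtype.val hSeq⟩, ?_⟩
  rintro y ⟨hy1, hy2⟩
  have hd : (y - S.1)ᵀ = y - S.1 := by
    rw [Matrix.transpose_sub, hy1, show (S.1)ᵀ = S.1 from S.2]
  have hd0 : (y - S.1) * M + M * (y - S.1) = 0 := by
    have hs2 : S.1 * M + M * S.1 = T := congrArg Subtype.val hSeq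
    rw [Matrix.sub_mul, Matrix.mul_sub]
    rw [show y * M - S.1 * M + (M * y - M * S.1)
        = (y * M + M * y) - (S.1 * M + M * S.1) by abel, hy2, hs2, sub_self]
  have := sylvester_inj hM hd hd0
  rw [sub_eq_zero] at this
  exact this


theorem oja_ss_block {n p : ℕ}
    (A : Matrix (Fin n) (Fin n) ℝ) (X : Matrix (Fin n) (Fin p) ℝ)
    (hA : A.PosDef) (hXo : Xᵀ * X = 1)
    (hAX : A * X = X * (Xᵀ * A * X)) :
    (∀ S : Matrix (Fin p) (Fin p) ℝ, Sᵀ = S →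
      X * ((1 / 2 : ℝ) •
          ((Xᵀ * X)⁻¹ * Xᵀ *
              (fderiv ℝ
                (fun Y : Matrix (Fin n) (Fin p) ℝ =>
                  (A * Y - Y * (Yᵀ * A * Y))
                    - Y * ((1 / 2 : ℝ) •
                        ((Yᵀ * Y)⁻¹ * Yᵀ * (A * Y - Y * (Yᵀ * A * Y))
                          - ((Yᵀ * Y)⁻¹ * Yᵀ * (A * Y - Y * (Yᵀ * A * Y)))ᵀ)))
                X (X * S))
            + ((Xᵀ * X)⁻¹ * Xᵀ *
              (fderiv ℝ
                (fun Y : Matrix (Fin n) (Fin p) ℝ =>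
                  (A * Y - Y * (Yᵀ * A * Y))
                    - Y * ((1 / 2 : ℝ) •
                        ((Yᵀ * Y)⁻¹ * Yᵀ * (A * Y - Y * (Yᵀ * A * Y))
                          - ((Yᵀ * Y)⁻¹ * Yᵀ * (A * Y - Y * (Yᵀ * A * Y)))ᵀ)))
                X (X * S)))ᵀ))
        = -(X * (S * (Xᵀ * A * X) + (Xᵀ * A * X) * S))) ∧
    (∀ T : Matrix (Fin p) (Fin p) ℝ, Tᵀ = T →
      ∃! S : Matrix (Fin p) (Fin p) ℝ,
        Sᵀ = S ∧ S * (Xᵀ * A * X) + (Xᵀ * A * X) * S = T) := by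
  have hAt : Aᵀ = A := by
    have := hA.1
    rwa [Matrix.IsHermitian, conjTranspose_eq_transpose_of_trivial] at this
  have hMt : (Xᵀ * A * X)ᵀ = Xᵀ * A * X := by
    rw [Matrix.transpose_mul, Matrix.transpose_mul, Matrix.transpose_transpose, hAt,
      ← Matrix.mul_assoc]
  have hMp : (Xᵀ * A * X).PosDef := by
    refine posDef_iff_dotProduct_mulVec.mpr ⟨?_, ?_⟩
    · show (Xᵀ * A * X)ᴴ = _
      rw [conjTranspose_eq_transpose_of_trivial, hMt]
    · intro x hx
      have hXx : X *ᵥ x ≠ 0 := by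
        intro h0
        apply hx
        have h1 : Xᵀ *ᵥ (X *ᵥ x) = 0 := by rw [h0, Matrix.mulVec_zero]
        rwa [Matrix.mulVec_mulVec, hXo, Matrix.one_mulVec] at h1
      have hpos := hA.dotProduct_mulVec_pos hXx
      simpa only [star_mulVec, dotProduct_mulVec, vecMul_vecMul,
        conjTranspose_eq_transpose_of_trivial, ← Matrix.mul_assoc] using hpos
  constructor
  · intro S hS
    rw [hXo]
    simp only [Matrix.nonsing_inv_eq_ringInverse, Ring.inverse_one, Matrix.one_mul]
    have hid : HasFDerivAt (fun Y : Matrix (Fin n) (Fin p) ℝ => Y)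
        (ContinuousLinearMap.id ℝ _) X := hasFDerivAt_id X
    have ht : HasFDerivAt (fun Y : Matrix (Fin n) (Fin p) ℝ => Yᵀ) (tCLM n p) X :=
      (tCLM n p).hasFDerivAt
    have hcA : HasFDerivAt (fun _ : Matrix (Fin n) (Fin p) ℝ => A) (0 : _ →L[ℝ] _) X :=
      hasFDerivAt_const A X
    have hF : HasFDerivAt (fun Y : Matrix (Fin n) (Fin p) ℝ => A * Y - Y * (Yᵀ * A * Y)) _ X :=
      (hasFDerivAt_matmul hcA hid).sub
        (hasFDerivAt_matmul hid (hasFDerivAt_matmul (hasFDerivAt_matmul ht hcA) hid))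
    have hru : HasFDerivAt (Ring.inverse : Matrix (Fin p) (Fin p) ℝ → _)
        (-(ContinuousLinearMap.mulLeftRight ℝ _ 1 1)) (Xᵀ * X) := by
      rw [hXo]
      simpa using hasFDerivAt_ringInverse (𝕜 := ℝ) (1 : (Matrix (Fin p) (Fin p) ℝ)ˣ)
    have hYtY : HasFDerivAt (fun Y : Matrix (Fin n) (Fin p) ℝ => Yᵀ * Y) _ X :=
      hasFDerivAt_matmul ht hid
    have hinv : HasFDerivAt (fun Y : Matrix (Fin n) (Fin p) ℝ => Ring.inverse (Yᵀ * Y)) _ X :=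
      HasFDerivAt.comp (g := Ring.inverse) X hru hYtY
    have hH : HasFDerivAt (fun Y : Matrix (Fin n) (Fin p) ℝ =>
        Ring.inverse (Yᵀ * Y) * Yᵀ * (A * Y - Y * (Yᵀ * A * Y))) _ X :=
      hasFDerivAt_matmul (hasFDerivAt_matmul hinv ht) hF
    have hHt : HasFDerivAt (fun Y : Matrix (Fin n) (Fin p) ℝ =>
        (Ring.inverse (Yᵀ * Y) * Yᵀ * (A * Y - Y * (Yᵀ * A * Y)))ᵀ) _ X :=
      (tCLM p p).hasFDerivAt.comp X hH
    have hK : HasFDerivAt (fun Y : Matrix (Fin n) (Fin p) ℝ =>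
        (1 / 2 : ℝ) • (Ring.inverse (Yᵀ * Y) * Yᵀ * (A * Y - Y * (Yᵀ * A * Y))
          - (Ring.inverse (Yᵀ * Y) * Yᵀ * (A * Y - Y * (Yᵀ * A * Y)))ᵀ)) _ X :=
      (hH.sub hHt).const_smul (1 / 2 : ℝ)
    have hG : HasFDerivAt (fun Y : Matrix (Fin n) (Fin p) ℝ =>
        (A * Y - Y * (Yᵀ * A * Y))
          - Y * ((1 / 2 : ℝ) • (Ring.inverse (Yᵀ * Y) * Yᵀ * (A * Y - Y * (Yᵀ * A * Y))
              - (Ring.inverse (Yᵀ * Y) * Yᵀ * (A * Y - Y * (Yᵀ * A * Y)))ᵀ))) _ X :=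
      hF.sub (hasFDerivAt_matmul hid hK)
    have hval : fderiv ℝ (fun Y : Matrix (Fin n) (Fin p) ℝ =>
        (A * Y - Y * (Yᵀ * A * Y))
          - Y * ((1 / 2 : ℝ) • (Ring.inverse (Yᵀ * Y) * Yᵀ * (A * Y - Y * (Yᵀ * A * Y))
              - (Ring.inverse (Yᵀ * Y) * Yᵀ * (A * Y - Y * (Yᵀ * A * Y)))ᵀ))) X (X * S)
        = (A * (X * S) + (0 : Matrix (Fin n) (Fin n) ℝ) * X - (X * (Xᵀ * A * (X * S) + (Xᵀ * (0 : Matrix (Fin n) (Fin n) ℝ) + (X * S)ᵀ * A) * X)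
              + (X * S) * (Xᵀ * A * X)))
          - (X * ((1 / 2 : ℝ) •
                ((Ring.inverse (Xᵀ * X) * Xᵀ * (A * (X * S) + (0 : Matrix (Fin n) (Fin n) ℝ) * X - (X * (Xᵀ * A * (X * S)
                    + (Xᵀ * (0 : Matrix (Fin n) (Fin n) ℝ) + (X * S)ᵀ * A) * X) + (X * S) * (Xᵀ * A * X)))
                  + (Ring.inverse (Xᵀ * X) * (X * S)ᵀ
                    + (-(1 * (Xᵀ * (X * S) + (X * S)ᵀ * X) * 1)) * Xᵀ) * (A * X - X * (Xᵀ * A * X)))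
                - (Ring.inverse (Xᵀ * X) * Xᵀ * (A * (X * S) + (0 : Matrix (Fin n) (Fin n) ℝ) * X - (X * (Xᵀ * A * (X * S)
                    + (Xᵀ * (0 : Matrix (Fin n) (Fin n) ℝ) + (X * S)ᵀ * A) * X) + (X * S) * (Xᵀ * A * X)))
                  + (Ring.inverse (Xᵀ * X) * (X * S)ᵀ
                    + (-(1 * (Xᵀ * (X * S) + (X * S)ᵀ * X) * 1)) * Xᵀ) * (A * X - X * (Xᵀ * A * X)))ᵀ))
            + (X * S) * ((1 / 2 : ℝ) • (Ring.inverse (Xᵀ * X) * Xᵀ * (A * X - X * (Xᵀ * A * X))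
              - (Ring.inverse (Xᵀ * X) * Xᵀ * (A * X - X * (Xᵀ * A * X)))ᵀ))) := by
      rw [hG.fderiv]
      rfl
    rw [hval]
    simp only [ContinuousLinearMap.add_apply, ContinuousLinearMap.coe_comp', Function.comp_apply, Pi.add_apply,
      ContinuousLinearMap.sub_apply, ContinuousLinearMap.coe_sub', Pi.sub_apply,
      ContinuousLinearMap.smul_apply, ContinuousLinearMap.coe_smul', Pi.smul_apply,
      precompR_matmul_apply, precompL_matmul_apply, tCLM_apply, ContinuousLinearMap.coe_id', id_eq,
      ContinuousLinearMap.zero_apply, ContinuousLinearMap.neg_apply,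
      ContinuousLinearMap.mulLeftRight_apply, Matrix.zero_mul, Matrix.mul_zero, one_mul, mul_one,
      hXo, Ring.inverse_one, Matrix.one_mul, Matrix.mul_one]
    have hF0 : A * X - X * (Xᵀ * A * X) = 0 := sub_eq_zero.mpr hAX
    simp only [hF0, Matrix.mul_zero, Matrix.zero_mul, add_zero, zero_add, smul_zero, sub_zero,
      Matrix.transpose_zero]
    simp only [Matrix.mul_assoc]
    set N := Xᵀ * (A * X) with hN
    have hAt : Aᵀ = A := by
      have := hA.1
      rwa [Matrix.IsHermitian, conjTranspose_eq_transpose_of_trivial] at this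
    have hNt : Nᵀ = N := by
      rw [hN, Matrix.transpose_mul, Matrix.transpose_mul, Matrix.transpose_transpose, hAt,
        Matrix.mul_assoc]
    have hAX' : A * X = X * N := by rw [hAX, hN, Matrix.mul_assoc]
    have na1 : ∀ B : Matrix (Fin p) (Fin p) ℝ, A * (X * B) = X * (N * B) := by
      intro B
      rw [← Matrix.mul_assoc, hAX', Matrix.mul_assoc]
    have na3 : ∀ B : Matrix (Fin p) (Fin p) ℝ, Xᵀ * (X * B) = B := by
      intro B
      rw [← Matrix.mul_assoc, hXo, Matrix.one_mul]
    have na3' : ∀ B : Matrix (Fin p) (Fin n) ℝ, Xᵀ * (X * B) = B := by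
      intro B
      rw [← Matrix.mul_assoc, hXo, Matrix.one_mul]
    simp only [na1, hAX', na3, na3', Matrix.transpose_mul, Matrix.transpose_transpose, hS, hNt,
      Matrix.mul_add, Matrix.add_mul, Matrix.mul_sub, Matrix.sub_mul, Matrix.mul_smul,
      Matrix.smul_mul, Matrix.mul_assoc, Matrix.mul_one, Matrix.one_mul, hXo,
      Matrix.transpose_add, Matrix.transpose_sub, Matrix.transpose_smul, smul_add, smul_sub,
      Matrix.neg_mul, Matrix.mul_neg]
    module
  · intro T hT
    exact sylvester_exun hMp hMt T hT
end
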